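/- Let k be a field, V a finite-dimensional k-vector space, N a nilpotent k-linear endomorphism of V, and W an increasing filtration of V indexed by ℤ satisfying the two defining conditions of the monodromy weight filtration of N centered at 0, namely N(W_j) ⊆ W_{j−2} for all j, and for every j ≥ 0 the map Gr_j → Gr_{−j} induced by N^j is an isomorphism. Then ker(N) ⊆ W_0 and W_{−1} ⊆ N(V) (i.e., every element of W_{−1} lies in the image of N). -/

import Mathlib

/-- An increasing filtration of `V` indexed by `ℤ`: monotone, eventually `⊥` below
and eventually `⊤` above. -/
def IsIntFiltration {k V : Type*} [Field k] [AddCommGroup V] [Module k V]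
    (W : ℤ → Submodule k V) : Prop :=
  Monotone W ∧ (∃ a : ℤ, W a = ⊥) ∧ (∃ b : ℤ, W b = ⊤)

/-- `W` is the monodromy weight filtration of the nilpotent endomorphism `N`, centered at `0`:
`N (W j) ⊆ W (j - 2)` for all `j`, and for every `j ≥ 0` the map `Gr_j → Gr_{-j}` induced
by `N ^ j` on graded quotients is an isomorphism (stated elementwise). -/
def IsWeightFiltration {k V : Type*} [Field k] [AddCommGroup V] [Module k V]
    (N : Module.End k V) (W : ℤ → Submodule k V) : Prop :=
  IsIntFiltration W ∧
  (∀ j : ℤ, ∀ v ∈ W j, N v ∈ W (j - 2)) ∧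
  (∀ j : ℕ,
    (∀ v ∈ W (j : ℤ), (N ^ j) v ∈ W (-(j : ℤ) - 1) → v ∈ W ((j : ℤ) - 1)) ∧
    (∀ w ∈ W (-(j : ℤ)), ∃ v ∈ W (j : ℤ), (N ^ j) v - w ∈ W (-(j : ℤ) - 1)))

/-! Since `N ^ j` kills `ker N` for `j ≥ 1`, injectivity of `Gr_j → Gr_{-j}` pushes `ker N` down
one step at a time from `W_j = V` to `W_0`. Dually, surjectivity of `Gr_n → Gr_{-n}` for `n ≥ 1`
writes every element of `W_{-n}` as an element of `im N` plus one of `W_{-n-1}`, so climbing up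
from some `W_a = 0` gives `W_{-1} ⊆ im N`. -/

namespace IsWeightFiltration

variable {k V : Type*} [Field k] [AddCommGroup V] [Module k V]
  {N : Module.End k V} {W : ℤ → Submodule k V}

theorem mem_of_mem_succ_of_apply_eq_zero (hW : IsWeightFiltration N W) {v : V} (hv : N v = 0)
    {j : ℕ} (hvj : v ∈ W (j + 1)) : v ∈ W j := by
  have hpow : (N ^ (j + 1)) v = 0 := by rw [pow_succ, Module.End.mul_apply, hv, map_zero]
  have := (hW.2.2 (j + 1)).1 v (by exact_mod_cast hvj) (by rw [hpow]; exact zero_mem _)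
  simpa using this

theorem ker_le (hW : IsWeightFiltration N W) : LinearMap.ker N ≤ W 0 := by
  obtain ⟨hmono, -, b, hb⟩ := hW.1
  intro v hv
  have descend : ∀ t : ℕ, v ∈ W t → v ∈ W 0 := by
    intro t
    induction t with
    | zero => exact id
    | succ t ih =>
      exact fun hvt => ih (hW.mem_of_mem_succ_of_apply_eq_zero hv (by exact_mod_cast hvt))
  exact descend b.toNat (hmono (Int.self_le_toNat b) (hb ▸ Submodule.mem_top))

theorem le_range_of_pred_le_range (hW : IsWeightFiltration N W) (n : ℕ)
    (hn : W (-(n + 1 : ℕ) - 1) ≤ LinearMap.range N) :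
    W (-(n + 1 : ℕ)) ≤ LinearMap.range N := by
  intro w hw
  obtain ⟨v, -, hvw⟩ := (hW.2.2 (n + 1)).2 w hw
  have hNv : (N ^ (n + 1)) v ∈ LinearMap.range N :=
    ⟨(N ^ n) v, by rw [← Module.End.mul_apply, ← pow_succ']⟩
  simpa using sub_mem hNv (hn hvw)

theorem le_range (hW : IsWeightFiltration N W) : W (-1) ≤ LinearMap.range N := by
  obtain ⟨hmono, ⟨a, ha⟩, -⟩ := hW.1
  have ascend : ∀ j, min a (-1) ≤ j → j ≤ -1 → W j ≤ LinearMap.range N := by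
    intro j hj
    induction j, hj using Int.leInduction with
    | base => exact fun _ => (hmono (min_le_left a _)).trans (ha ▸ bot_le)
    | succ j _ ih =>
      intro hj
      obtain ⟨n, hn⟩ : ∃ n : ℕ, j + 1 = -(n + 1 : ℕ) := ⟨(-j - 2).toNat, by omega⟩
      rw [hn]
      refine hW.le_range_of_pred_le_range n ?_
      rw [← hn, add_sub_cancel_right]
      exact ih (by omega)
  exact ascend (-1) (min_le_right a _) le_rfl

end IsWeightFiltration

theorem ker_subset_W_zero_and_W_neg_one_subset_image_general {k V : Type*} [Field k]
    [AddCommGroup V] [Module k V]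
    (N : Module.End k V)
    (W : ℤ → Submodule k V) (hW : IsWeightFiltration N W) :
    (∀ v : V, N v = 0 → v ∈ W 0) ∧ (∀ v ∈ W (-1), ∃ u : V, N u = v) :=
  ⟨fun _ hv => hW.ker_le hv, fun _ hv => hW.le_range hv⟩

/-- For the monodromy weight filtration of `N` centered at `0`:
`ker N ⊆ W 0` and `W (-1) ⊆ im N`. -/
theorem ker_subset_W_zero_and_W_neg_one_subset_image {k V : Type*} [Field k]
    [AddCommGroup V] [Module k V] [FiniteDimensional k V]
    (N : Module.End k V) (hN : IsNilpotent N)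
    (W : ℤ → Submodule k V) (hW : IsWeightFiltration N W) :
    (∀ v : V, N v = 0 → v ∈ W 0) ∧ (∀ v ∈ W (-1), ∃ u : V, N u = v) :=
  ker_subset_W_zero_and_W_neg_one_subset_image_general N W hW
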